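/- Suppose U(s,t) satisfies U(s,t)ᵀ C(t)^{−1} U(s,t) = e^{−2σ(t−s)} C(s)^{−1} with C(t), C(s) symmetric positive definite. Then there exists an orthogonal matrix Q such that U(s,t) = e^{−σ(t−s)} C(t)^{1/2} Q C(s)^{−1/2}, and consequently ‖U(s,t)‖₂ ≤ e^{−σ(t−s)} √(‖C(t)‖₂ · ‖C(s)^{−1}‖₂). -/

import Mathlib

/-!
Writing `A = C(t)^{1/2}` and `B = C(s)^{1/2}`, the hypothesis says exactly that
`Q = e^{σ(t-s)} A⁻¹ U B` satisfies `Qᵀ Q = 1`. The norm bound then follows from unitary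
invariance of the operator norm and the C⋆-identity `‖A‖² = ‖A * A‖ = ‖C(t)‖`, and likewise
`‖B⁻¹‖² = ‖C(s)⁻¹‖`.
-/

open MeasureTheory Matrix

open scoped ComplexOrder in
/-- The square root of a positive semidefinite matrix, as defined in the older Mathlib
(removed from current Mathlib). -/
noncomputable def Matrix.PosSemidef.sqrt {n 𝕜 : Type*} [Fintype n] [RCLike 𝕜] [DecidableEq n]
    {A : Matrix n n 𝕜} (hA : A.PosSemidef) : Matrix n n 𝕜 :=
  hA.1.eigenvectorUnitary.1 * diagonal ((↑) ∘ (√·) ∘ hA.1.eigenvalues) *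
    (star hA.1.eigenvectorUnitary : Matrix n n 𝕜)

noncomputable def opNorm {d : ℕ} (M : Matrix (Fin d) (Fin d) ℝ) : ℝ :=
  ‖Matrix.toEuclideanCLM (𝕜 := ℝ) M‖

namespace Matrix

section Sqrt

variable {n 𝕜 : Type*} [Fintype n] [RCLike 𝕜] [DecidableEq n] {A : Matrix n n 𝕜}

open scoped ComplexOrder

theorem PosSemidef.sqrt_mul_self (hA : A.PosSemidef) : hA.sqrt * hA.sqrt = A := by
  set V : Matrix n n 𝕜 := (hA.1.eigenvectorUnitary : Matrix n n 𝕜)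
  have hVV : star V * V = 1 := Unitary.coe_star_mul_self _
  have hD : diagonal ((↑) ∘ (√·) ∘ hA.1.eigenvalues) *
      diagonal ((↑) ∘ (√·) ∘ hA.1.eigenvalues) = diagonal (((↑) ∘ hA.1.eigenvalues) : n → 𝕜) := by
    rw [diagonal_mul_diagonal]
    congr! with i
    simp [← RCLike.ofReal_mul, Real.mul_self_sqrt (hA.eigenvalues_nonneg i)]
  have h := hA.1.spectral_theorem
  rw [Unitary.conjStarAlgAut_apply] at h
  calc hA.sqrt * hA.sqrt = V * (diagonal ((↑) ∘ (√·) ∘ hA.1.eigenvalues) * (star V * V) *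
        diagonal ((↑) ∘ (√·) ∘ hA.1.eigenvalues)) * star V := by
        simp only [PosSemidef.sqrt, V, Matrix.mul_assoc]
    _ = A := by rw [hVV, Matrix.mul_one, hD]; exact h.symm

theorem PosSemidef.isHermitian_sqrt (hA : A.PosSemidef) : hA.sqrt.IsHermitian := by
  have hD : (diagonal ((↑) ∘ (√·) ∘ hA.1.eigenvalues) : Matrix n n 𝕜)ᴴ =
      diagonal ((↑) ∘ (√·) ∘ hA.1.eigenvalues) := by
    rw [diagonal_conjTranspose]
    congr 1
    funext i
    exact RCLike.conj_ofReal _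
  simp only [IsHermitian, PosSemidef.sqrt, conjTranspose_mul, star_eq_conjTranspose,
    conjTranspose_conjTranspose, hD, Matrix.mul_assoc]

theorem PosDef.isUnit_det_sqrt (hA : A.PosDef) : IsUnit hA.posSemidef.sqrt.det := by
  refine isUnit_of_mul_isUnit_left (y := hA.posSemidef.sqrt.det) ?_
  rw [← det_mul, hA.posSemidef.sqrt_mul_self, ← isUnit_iff_isUnit_det]
  exact hA.isUnit

end Sqrt

theorem exists_eq_smul_mul_orthogonal_mul_inv {n K : Type*} [Fintype n] [DecidableEq n]
    [Field K] {A B U : Matrix n n K} (hA : IsUnit A.det) (hB : IsUnit B.det) {c : K} (hc : c ≠ 0)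
    (hU : Uᵀ * (A * Aᵀ)⁻¹ * U = (c * c) • (B * Bᵀ)⁻¹) :
    ∃ Q : Matrix n n K, Qᵀ * Q = 1 ∧ U = c • (A * Q * B⁻¹) := by
  have hBt : IsUnit Bᵀ.det := by rwa [det_transpose]
  refine ⟨c⁻¹ • (A⁻¹ * U * B), ?_, ?_⟩
  · calc (c⁻¹ • (A⁻¹ * U * B))ᵀ * (c⁻¹ • (A⁻¹ * U * B))
          = (c⁻¹ * c⁻¹) • (Bᵀ * (Uᵀ * (A * Aᵀ)⁻¹ * U) * B) := by
          rw [transpose_smul, smul_mul_smul_comm, transpose_mul, transpose_mul,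
            transpose_nonsing_inv, Matrix.mul_inv_rev]
          simp only [Matrix.mul_assoc]
      _ = Bᵀ * (Bᵀ⁻¹ * B⁻¹) * B := by
          rw [hU, Matrix.mul_smul, Matrix.smul_mul, smul_smul, Matrix.mul_inv_rev]
          field_simp
          rw [one_smul]
      _ = 1 := by
          rw [← Matrix.mul_assoc, mul_nonsing_inv _ hBt, Matrix.one_mul, nonsing_inv_mul _ hB]
  · rw [Matrix.mul_smul, Matrix.smul_mul, smul_smul, mul_inv_cancel₀ hc, one_smul,
      ← Matrix.mul_assoc, ← Matrix.mul_assoc, mul_nonsing_inv _ hA, Matrix.one_mul,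
      Matrix.mul_assoc, mul_nonsing_inv _ hB, Matrix.mul_one]

end Matrix

section CStarRing

variable {E : Type*} [NormedRing E] [StarRing E] [CStarRing E]

theorem norm_mul_mem_unitary_mul_le (a b : E) {u : E} (hu : u ∈ unitary E) :
    ‖a * u * b‖ ≤ ‖a‖ * ‖b‖ :=
  (norm_mul_le _ _).trans_eq (by rw [CStarRing.norm_mul_mem_unitary a hu])

theorem IsSelfAdjoint.norm_eq_sqrt_norm_mul_self {a : E} (ha : IsSelfAdjoint a) :
    ‖a‖ = √‖a * a‖ := by
  rw [ha.norm_mul_self, Real.sqrt_sq (norm_nonneg a)]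

end CStarRing

open scoped Matrix.Norms.L2Operator in
theorem stmt16_general {d : ℕ} (σ s t : ℝ)
    (Ct Cs U : Matrix (Fin d) (Fin d) ℝ) (hCt : Ct.PosDef) (hCs : Cs.PosDef)
    (hU : Uᵀ * Ct⁻¹ * U = Real.exp (-2 * σ * (t - s)) • Cs⁻¹) :
    (∃ Q : Matrix (Fin d) (Fin d) ℝ, Qᵀ * Q = 1 ∧
      U = Real.exp (-σ * (t - s)) • (hCt.posSemidef.sqrt * Q * (hCs.posSemidef.sqrt)⁻¹)) ∧
    opNorm U ≤ Real.exp (-σ * (t - s)) * Real.sqrt (opNorm Ct * opNorm Cs⁻¹) := by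
  set A := hCt.posSemidef.sqrt
  set B := hCs.posSemidef.sqrt
  set c := Real.exp (-σ * (t - s))
  have hA : A.IsHermitian := hCt.posSemidef.isHermitian_sqrt
  have hB : B.IsHermitian := hCs.posSemidef.isHermitian_sqrt
  have hCtA : Ct = A * Aᵀ := by
    rw [← conjTranspose_eq_transpose_of_trivial, hA.eq, hCt.posSemidef.sqrt_mul_self]
  have hCsB : Cs = B * Bᵀ := by
    rw [← conjTranspose_eq_transpose_of_trivial, hB.eq, hCs.posSemidef.sqrt_mul_self]
  have hcc : Real.exp (-2 * σ * (t - s)) = c * c := by rw [← Real.exp_add]; ring_nf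
  have hUAB : Uᵀ * (A * Aᵀ)⁻¹ * U = (c * c) • (B * Bᵀ)⁻¹ := by rwa [← hCtA, ← hCsB, ← hcc]
  obtain ⟨Q, hQ, hUQ⟩ := exists_eq_smul_mul_orthogonal_mul_inv hCt.isUnit_det_sqrt
    hCs.isUnit_det_sqrt (Real.exp_ne_zero _) hUAB
  refine ⟨⟨Q, hQ, hUQ⟩, ?_⟩
  have hQu : Q ∈ unitary (Matrix (Fin d) (Fin d) ℝ) := mem_unitaryGroup_iff'.mpr <| by
    rwa [star_eq_conjTranspose, conjTranspose_eq_transpose_of_trivial]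
  calc opNorm U = c * ‖A * Q * B⁻¹‖ := by
        rw [opNorm, ← cstar_norm_def, hUQ, norm_smul, Real.norm_of_nonneg (Real.exp_pos _).le]
    _ ≤ c * (‖A‖ * ‖B⁻¹‖) := by gcongr; exact norm_mul_mem_unitary_mul_le _ _ hQu
    _ = c * √(opNorm Ct * opNorm Cs⁻¹) := by
        rw [hA.isSelfAdjoint.norm_eq_sqrt_norm_mul_self,
          hB.inv.isSelfAdjoint.norm_eq_sqrt_norm_mul_self, ← Real.sqrt_mul (norm_nonneg _),
          ← Matrix.mul_inv_rev, hCt.posSemidef.sqrt_mul_self, hCs.posSemidef.sqrt_mul_self]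
        rfl

theorem stmt16 {d : ℕ} (σ s t : ℝ) (hσ : 0 ≤ σ) (hst : s ≤ t)
    (Ct Cs U : Matrix (Fin d) (Fin d) ℝ) (hCt : Ct.PosDef) (hCs : Cs.PosDef)
    (hU : Uᵀ * Ct⁻¹ * U = Real.exp (-2 * σ * (t - s)) • Cs⁻¹) :
    (∃ Q : Matrix (Fin d) (Fin d) ℝ, Qᵀ * Q = 1 ∧
      U = Real.exp (-σ * (t - s)) • (hCt.posSemidef.sqrt * Q * (hCs.posSemidef.sqrt)⁻¹)) ∧
    opNorm U ≤ Real.exp (-σ * (t - s)) * Real.sqrt (opNorm Ct * opNorm Cs⁻¹) :=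
  stmt16_general σ s t Ct Cs U hCt hCs hU
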